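/- Let U ⊆ ℂ be a connected open set and u : U → ℝ a harmonic function. If the set {z ∈ U : u(z) = 0} has positive two-dimensional Lebesgue measure, then u is identically zero on U. -/

import Mathlib

/-!
If `u` had a nonzero gradient at a Lebesgue density point of its zero set `S`, then near that
point `u` would be nonzero on a ball filling a fixed proportion of every small ball around it,
contradicting density `1`. So the gradient vanishes almost everywhere on `S`, and with it the
holomorphic function `∂u/∂x - i ∂u/∂y`. Zeros of a nonzero holomorphic function on a connected
open set are discrete, hence form a null set; as `S` has positive measure, `∂u/∂x - i ∂u/∂y`
vanishes on all of `U`, so `u` is constant on `U`, equal to its value `0` on `S`.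
-/

open MeasureTheory

/-- The Laplacian `∂²u/∂x² + ∂²u/∂y²` of a function `u : ℂ → ℝ`,
under the identification `ℂ ≅ ℝ²`. -/
noncomputable def laplacian (u : ℂ → ℝ) (z : ℂ) : ℝ :=
  fderiv ℝ (fun w => fderiv ℝ u w 1) z 1 +
    fderiv ℝ (fun w => fderiv ℝ u w Complex.I) z Complex.I

/-- `u` is harmonic on the open set `U ⊆ ℂ`: it is twice continuously
differentiable on `U` and its Laplacian vanishes identically on `U`. -/
def IsHarmonicOn (u : ℂ → ℝ) (U : Set ℂ) : Prop :=
  ContDiffOn ℝ 2 u U ∧ ∀ z ∈ U, laplacian u z = 0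

open Metric Filter Topology Set Complex Module
open scoped Laplacian

section Density

variable {E F : Type*} [NormedAddCommGroup E] [NormedSpace ℝ E] [NormedAddCommGroup F]
  [NormedSpace ℝ F]

theorem HasFDerivAt.exists_forall_mem_ball_ne_zero {u : E → F} {L : E →L[ℝ] F} {z v : E}
    (hu : HasFDerivAt u L z) (hz : u z = 0) (hv : L v ≠ 0) :
    ∃ δ > 0, ∃ ρ > 0, ∀ r ∈ Ioo 0 ρ, ∀ w ∈ ball (z + r • v) (δ * r), u w ≠ 0 := by
  set c := ‖L v‖
  have hc : 0 < c := norm_pos_iff.2 hv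
  -- On the ball, `‖L (w - z)‖ ≥ r * c / 2` while the Taylor remainder is `< r * c / 4`.
  set δ := c / (2 * (‖L‖ + 1))
  have hδ : 0 < δ := by positivity
  have hLδ : ‖L‖ * δ ≤ c / 2 := calc
    ‖L‖ * δ ≤ (‖L‖ + 1) * δ := by gcongr; linarith
    _ = c / 2 := by simp only [δ]; field_simp
  have hk : 0 < c / (4 * (‖v‖ + δ)) := by positivity
  obtain ⟨ε, hε, hball⟩ := eventually_nhds_iff_ball.1 (hu.isLittleO.def hk)
  refine ⟨δ, hδ, ε / (‖v‖ + δ), by positivity, fun r ⟨hr, hrρ⟩ w hw huw ↦ ?_⟩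
  rw [mem_ball, dist_eq_norm, ← sub_sub] at hw
  have hwz : ‖w - z‖ < r * (‖v‖ + δ) := calc
    ‖w - z‖ ≤ ‖w - z - r • v‖ + ‖r • v‖ := norm_le_norm_sub_add _ _
    _ < δ * r + r * ‖v‖ := by rw [norm_smul, Real.norm_of_nonneg hr.le]; gcongr
    _ = r * (‖v‖ + δ) := by ring
  have hlow : r * c / 2 ≤ ‖L (w - z)‖ := calc
    r * c / 2 ≤ ‖r • L v‖ - ‖L‖ * (δ * r) := by
      rw [norm_smul, Real.norm_of_nonneg hr.le]; nlinarith
    _ ≤ ‖r • L v‖ - ‖L (w - z - r • v)‖ := by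
      gcongr; exact L.le_of_opNorm_le le_rfl _ |>.trans (by gcongr)
    _ ≤ ‖L (w - z)‖ := by
      rw [map_sub, map_smul, norm_sub_rev]
      linarith [norm_sub_norm_le (r • L v) (L (w - z))]
  have hwε : w ∈ ball z ε := by
    rw [mem_ball, dist_eq_norm]
    exact hwz.trans ((lt_div_iff₀ (by positivity)).1 hrρ)
  have hup : ‖L (w - z)‖ < r * c / 4 := calc
    ‖L (w - z)‖ = ‖u w - u z - L (w - z)‖ := by rw [huw, hz, sub_zero, zero_sub, norm_neg]
    _ ≤ c / (4 * (‖v‖ + δ)) * ‖w - z‖ := hball w hwε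
    _ < c / (4 * (‖v‖ + δ)) * (r * (‖v‖ + δ)) := by gcongr
    _ = r * c / 4 := by field_simp
  linarith [mul_pos hr hc]

variable [FiniteDimensional ℝ E] [MeasurableSpace E] [BorelSpace E]

theorem measure_inter_closedBall_div_le_of_disjoint_ball [Nontrivial E] (μ : Measure E)
    [μ.IsAddHaarMeasure] {s : Set E} {x y : E} {r δ : ℝ} (hδ : 0 < δ)
    (hsub : ball y (δ * r) ⊆ closedBall x r)
    (hdisj : Disjoint s (ball y (δ * r))) :
    μ (s ∩ closedBall x r) / μ (closedBall x r) ≤ 1 - ENNReal.ofReal (δ ^ finrank ℝ E) := by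
  have hball : μ (ball y (δ * r)) = ENNReal.ofReal (δ ^ finrank ℝ E) * μ (closedBall x r) := by
    rw [Measure.addHaar_ball_mul_of_pos μ y hδ, Measure.addHaar_closedBall_eq_addHaar_ball,
      Measure.addHaar_ball_center μ x]
  have hsum : μ (s ∩ closedBall x r) + μ (ball y (δ * r)) ≤ μ (closedBall x r) := by
    rw [← measure_union (hdisj.mono_left inter_subset_left) measurableSet_ball]
    exact measure_mono (union_subset inter_subset_right hsub)
  apply ENNReal.div_le_of_le_mul
  rw [ENNReal.sub_mul fun _ _ ↦ measure_closedBall_lt_top.ne, one_mul, ← hball]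
  exact ENNReal.le_sub_of_add_le_right measure_ball_lt_top.ne hsum

theorem HasFDerivAt.eq_zero_of_tendsto_measure_inter_div (μ : Measure E) [μ.IsAddHaarMeasure]
    {u : E → F} {L : E →L[ℝ] F} {s : Set E} {z : E} (hu : HasFDerivAt u L z)
    (hs : ∀ w ∈ s, u w = 0) (hz : z ∈ s)
    (hd : Tendsto (fun r ↦ μ (s ∩ closedBall z r) / μ (closedBall z r)) (𝓝[>] 0) (𝓝 1)) :
    L = 0 := by
  by_contra hL
  obtain ⟨v, hv⟩ : ∃ v, L v ≠ 0 := by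
    by_contra! h
    exact hL (ContinuousLinearMap.ext h)
  have hv0 : v ≠ 0 := by rintro rfl; simp at hv
  have : Nontrivial E := nontrivial_of_ne v 0 hv0
  set v' := (2 * ‖v‖)⁻¹ • v
  have hLv' : L v' ≠ 0 := by
    rw [map_smul]; exact smul_ne_zero (by positivity) hv
  have hv' : ‖v'‖ = 1 / 2 := by
    rw [norm_smul, norm_inv, norm_mul, Real.norm_two, norm_norm]; field_simp
  obtain ⟨δ, hδ, ρ, hρ, hne⟩ := hu.exists_forall_mem_ball_ne_zero (hs z hz) hLv'
  set δ' := min δ (1 / 2)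
  have hδ' : 0 < δ' := lt_min hδ one_half_pos
  have hbound : ∀ᶠ r in 𝓝[>] 0, μ (s ∩ closedBall z r) / μ (closedBall z r) ≤
      1 - ENNReal.ofReal (δ' ^ finrank ℝ E) := by
    filter_upwards [Ioo_mem_nhdsGT hρ] with r hr
    refine measure_inter_closedBall_div_le_of_disjoint_ball μ (y := z + r • v') hδ' ?_ ?_
    · refine ball_subset_closedBall.trans (closedBall_subset_closedBall' ?_)
      rw [dist_self_add_left, norm_smul, Real.norm_of_nonneg hr.1.le, hv']
      nlinarith [min_le_right δ (1 / 2), hr.1]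
    · refine disjoint_left.2 fun w hws hwb ↦ hne r hr w (ball_subset_ball ?_ hwb) (hs w hws)
      exact mul_le_mul_of_nonneg_right (min_le_left _ _) hr.1.le
  exact (le_of_tendsto hd hbound).not_gt (ENNReal.sub_lt_self ENNReal.one_ne_top one_ne_zero
    (ENNReal.ofReal_pos.2 (pow_pos hδ' _)).ne')

end Density

theorem ContDiffAt.laplacian_eq_innerProductSpace_laplacian {u : ℂ → ℝ} {z : ℂ}
    (hu : ContDiffAt ℝ 2 u z) : laplacian u z = Δ u z := by
  have hDu : DifferentiableAt ℝ (fderiv ℝ u) z :=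
    (hu.fderiv_right le_rfl).differentiableAt one_ne_zero
  simp [laplacian, InnerProductSpace.laplacian_eq_iteratedFDeriv_complexPlane,
    iteratedFDeriv_two_apply, fderiv_clm_apply hDu (differentiableAt_const _)]

theorem IsHarmonicOn.harmonicOnNhd {u : ℂ → ℝ} {U : Set ℂ} (hU : IsOpen U)
    (hu : IsHarmonicOn u U) : InnerProductSpace.HarmonicOnNhd u U := fun _ hz ↦
  ⟨hu.1.contDiffAt (hU.mem_nhds hz), eventually_of_mem (hU.mem_nhds hz) fun w hw ↦
    ((hu.1.contDiffAt (hU.mem_nhds hw)).laplacian_eq_innerProductSpace_laplacian ▸ hu.2 w hw)⟩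

theorem ContinuousLinearMap.eq_zero_of_complex_partial_eq_zero {L : ℂ →L[ℝ] ℝ}
    (h : (L 1 : ℂ) - I * L I = 0) : L = 0 := by
  have h1 : L 1 = 0 := by simpa using congrArg re h
  have hI : L I = 0 := by simpa using congrArg im h
  ext1 w
  rw [← re_add_im w, ← mul_one (w.re : ℂ), ← real_smul, ← real_smul, map_add, map_smul, map_smul,
    h1, hI]
  simp

theorem AnalyticOnNhd.eqOn_zero_of_ae_restrict_eq_zero {𝕜 E : Type*} [NontriviallyNormedField 𝕜]
    [NormedAddCommGroup E] [NormedSpace 𝕜 E] [MeasurableSpace 𝕜] [SecondCountableTopology 𝕜]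
    {μ : Measure 𝕜} [NullSingletonClass μ] {f : 𝕜 → E} {U s : Set 𝕜} (hf : AnalyticOnNhd 𝕜 f U)
    (hU : IsPreconnected U) (hUm : MeasurableSet U) (hsU : s ⊆ U) (hs : μ s ≠ 0)
    (h : ∀ᵐ z ∂μ.restrict s, f z = 0) : EqOn f 0 U := by
  refine (hf.eqOn_zero_or_eventually_ne_zero_of_preconnected hU).resolve_right fun hne ↦ hs ?_
  have hne' : ∀ᵐ z ∂μ.restrict s, f z ≠ 0 :=
    ae_restrict_of_ae_restrict_of_subset hsU (ae_restrict_le_codiscreteWithin hUm hne)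
  rw [← Measure.restrict_eq_zero, ← ae_eq_bot]
  simpa using h.and hne'

/-- If a harmonic function on a connected open set `U ⊆ ℂ` vanishes on a set
of positive two-dimensional Lebesgue measure, it vanishes identically on `U`. -/
theorem harmonic_eq_zero_of_pos_measure_zero_set (U : Set ℂ) (hU : IsOpen U)
    (hUc : IsConnected U) (u : ℂ → ℝ) (hu : IsHarmonicOn u U)
    (hpos : 0 < volume {z : ℂ | z ∈ U ∧ u z = 0}) :
    ∀ z ∈ U, u z = 0 := by
  set S := {z : ℂ | z ∈ U ∧ u z = 0}
  have hSm : MeasurableSet S := by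
    have : S = U \ (U ∩ u ⁻¹' {0}ᶜ) := by ext; simp [S]
    exact this ▸ hU.measurableSet.diff
      (hu.1.continuousOn.isOpen_inter_preimage hU isOpen_compl_singleton).measurableSet
  set g : ℂ → ℂ := fun z ↦ (fderiv ℝ u z 1 : ℂ) - I * fderiv ℝ u z I
  have hg : AnalyticOnNhd ℂ g U :=
    fun z hz ↦ HarmonicAt.analyticAt_complex_partial (hu.harmonicOnNhd hU z hz)
  have hgS : ∀ᵐ z ∂volume.restrict S, g z = 0 := by
    filter_upwards [Besicovitch.ae_tendsto_measure_inter_div volume S, ae_restrict_mem hSm]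
      with z hd hz
    have hDu := ((hu.1.contDiffAt (hU.mem_nhds hz.1)).differentiableAt two_ne_zero).hasFDerivAt
    simp [g, hDu.eq_zero_of_tendsto_measure_inter_div volume (fun w hw ↦ hw.2) hz hd]
  have hDu : EqOn (fderiv ℝ u) 0 U := fun z hz ↦
    ContinuousLinearMap.eq_zero_of_complex_partial_eq_zero
      (hg.eqOn_zero_of_ae_restrict_eq_zero hUc.isPreconnected hU.measurableSet (sep_subset U _)
        hpos.ne' hgS hz)
  obtain ⟨z₀, hz₀U, hz₀⟩ := nonempty_of_measure_ne_zero hpos.ne'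
  intro z hz
  rw [hU.is_const_of_fderiv_eq_zero hUc.isPreconnected (hu.1.differentiableOn two_ne_zero) hDu
    hz hz₀U, hz₀]
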